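/- Let A₁, A₂ : ℝ → ℂ solve i A₁' = |A₂|²A₂, i A₂' = |A₁|²A₁, and set ρ± = |A₁|² ± |A₂|², I = 2Im(conj(A₁)A₂). Then ρ₊' = -I ρ₋, ρ₋' = I ρ₊, and I' = -2ρ₊ρ₋. -/

import Mathlib

/-!
Solving the system for the derivatives gives `A₁' = -i |A₂|² A₂` and `A₂' = -i |A₁|² A₁`.
Since `(|A|²)' = 2 Re(conj A · A')` and `(conj A₁ · A₂)' = conj A₁' · A₂ + conj A₁ · A₂'`,
substituting these expressions reduces each of the three identities to a polynomial identity
in the real and imaginary parts of `A₁` and `A₂`.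
-/

open Complex ComplexConjugate

section

variable {f g : ℝ → ℂ} {f' g' : ℂ} {t : ℝ}

theorem HasDerivAt.complex_re (hf : HasDerivAt f f' t) :
    HasDerivAt (fun s => (f s).re) f'.re t :=
  reCLM.hasFDerivAt.comp_hasDerivAt t hf

theorem HasDerivAt.complex_im (hf : HasDerivAt f f' t) :
    HasDerivAt (fun s => (f s).im) f'.im t :=
  imCLM.hasFDerivAt.comp_hasDerivAt t hf

theorem HasDerivAt.conj_mul (hf : HasDerivAt f f' t) (hg : HasDerivAt g g' t) :
    HasDerivAt (fun s => conj (f s) * g s) (conj f' * g t + conj (f t) * g') t :=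
  hf.star.mul hg

theorem HasDerivAt.complex_normSq (hf : HasDerivAt f f' t) :
    HasDerivAt (fun s => normSq (f s)) (2 * (conj (f t) * f').re) t := by
  have h := (hf.conj_mul hf).complex_re
  simp only [← normSq_eq_conj_mul_self, ofReal_re] at h
  refine h.congr_deriv ?_
  rw [add_re, ← conj_re, map_mul, Complex.conj_conj, mul_comm]
  ring

end

theorem eq_neg_I_mul_of_I_mul_eq {a b : ℂ} (h : I * a = b) : a = -I * b := by
  rw [← h, ← mul_assoc, neg_mul, I_mul_I, neg_neg, one_mul]

theorem stmt12 (A₁ A₂ A₁' A₂' : ℝ → ℂ)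
    (hd₁ : ∀ t, HasDerivAt A₁ (A₁' t) t)
    (hd₂ : ∀ t, HasDerivAt A₂ (A₂' t) t)
    (hode₁ : ∀ t, Complex.I * A₁' t = (Complex.normSq (A₂ t) : ℂ) * A₂ t)
    (hode₂ : ∀ t, Complex.I * A₂' t = (Complex.normSq (A₁ t) : ℂ) * A₁ t) :
    let ρp : ℝ → ℝ := fun t => Complex.normSq (A₁ t) + Complex.normSq (A₂ t)
    let ρm : ℝ → ℝ := fun t => Complex.normSq (A₁ t) - Complex.normSq (A₂ t)
    let I : ℝ → ℝ := fun t => 2 * ((starRingEnd ℂ) (A₁ t) * A₂ t).im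
    ∀ t : ℝ,
      HasDerivAt ρp (-(I t) * ρm t) t ∧
      HasDerivAt ρm (I t * ρp t) t ∧
      HasDerivAt I (-2 * ρp t * ρm t) t := by
  intro ρp ρm I t
  have hn₁ := (hd₁ t).complex_normSq
  have hn₂ := (hd₂ t).complex_normSq
  have hI := ((hd₁ t).conj_mul (hd₂ t)).complex_im.const_mul 2
  simp only [eq_neg_I_mul_of_I_mul_eq (hode₁ t), eq_neg_I_mul_of_I_mul_eq (hode₂ t)] at hn₁ hn₂ hI
  refine ⟨(hn₁.add hn₂).congr_deriv ?_, (hn₁.sub hn₂).congr_deriv ?_, hI.congr_deriv ?_⟩ <;>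
  · simp only [ρp, ρm, I, normSq_apply, mul_re, mul_im, conj_re, conj_im, neg_re, neg_im,
      I_re, I_im, ofReal_re, ofReal_im, add_im, map_mul, map_neg, conj_I, conj_ofReal]
    ring
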